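/- For any constants ω₁₂, ω₂₃, ω₁₃ ∈ ℂ, the bracket on ℂ[u,v,w] defined as a biderivation by {u,v} = uv − 2w − ω₁₃, {v,w} = vw − 2u − ω₁₂, {w,u} = wu − 2v − ω₂₃ satisfies the Jacobi identity: for all polynomials f,g,h ∈ ℂ[u,v,w], {f,{g,h}} + {g,{h,f}} + {h,{f,g}} = 0. In other words, the abstract algebra of the formulae {G₁₂,G₂₃}=G₁₂G₂₃−2G₁₃−ω₁₃, {G₂₃,G₁₃}=G₂₃G₁₃−2G₁₂−ω₁₂, {G₁₃,G₁₂}=G₁₂G₁₃−2G₂₃−ω₂₃ is a Poisson algebra for any choice of the constants ω_{i,j}. -/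

import Mathlib

/-!
The bracket is the Jacobian (Nambu) bracket `{f, g} = det (∇c, ∇f, ∇g)` of the cubic
`c = uvw − u² − v² − w² − ω₁₂ u − ω₂₃ v − ω₁₃ w`. Every Jacobian bracket on a polynomial ring
in three variables satisfies the Jacobi identity: after expanding by the Leibniz rule, the
cyclic sum is a polynomial identity in the first and second partial derivatives of `c, f, g, h`,
which holds once mixed partials are identified.
-/

open MvPolynomial

/-- The bracket on `ℂ[u,v,w]` (with `u = X 0`, `v = X 1`, `w = X 2`) defined as
the biderivation with `{u,v} = uv − 2w − ω₁₃`, `{v,w} = vw − 2u − ω₁₂`,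
`{w,u} = wu − 2v − ω₂₃`. -/
noncomputable def d4Bracket (ω₁₂ ω₂₃ ω₁₃ : ℂ) (f g : MvPolynomial (Fin 3) ℂ) :
    MvPolynomial (Fin 3) ℂ :=
  (X 0 * X 1 - 2 * X 2 - C ω₁₃) * (pderiv 0 f * pderiv 1 g - pderiv 1 f * pderiv 0 g)
  + (X 1 * X 2 - 2 * X 0 - C ω₁₂) * (pderiv 1 f * pderiv 2 g - pderiv 2 f * pderiv 1 g)
  + (X 2 * X 0 - 2 * X 1 - C ω₂₃) * (pderiv 2 f * pderiv 0 g - pderiv 0 f * pderiv 2 g)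

namespace MvPolynomial

variable {R σ : Type*} [CommRing R]

theorem pderiv_pderiv_comm (i j : σ) (p : MvPolynomial σ R) :
    pderiv i (pderiv j p) = pderiv j (pderiv i p) := by
  have hcomm : ⁅pderiv i, pderiv j⁆ = (0 : Derivation R (MvPolynomial σ R) (MvPolynomial σ R)) :=
    derivation_ext fun k => by
      rw [Derivation.commutator_apply]
      classical simp [pderiv_X, Pi.single_apply, apply_ite]
  rw [← sub_eq_zero, ← Derivation.commutator_apply, hcomm, Derivation.zero_apply]

noncomputable def jacobianBracket (c f g : MvPolynomial (Fin 3) R) : MvPolynomial (Fin 3) R :=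
  pderiv 0 c * (pderiv 1 f * pderiv 2 g - pderiv 2 f * pderiv 1 g)
  + pderiv 1 c * (pderiv 2 f * pderiv 0 g - pderiv 0 f * pderiv 2 g)
  + pderiv 2 c * (pderiv 0 f * pderiv 1 g - pderiv 1 f * pderiv 0 g)

theorem jacobianBracket_jacobi (c f g h : MvPolynomial (Fin 3) R) :
    jacobianBracket c f (jacobianBracket c g h) + jacobianBracket c g (jacobianBracket c h f)
      + jacobianBracket c h (jacobianBracket c f g) = 0 := by
  simp only [jacobianBracket, map_add, map_sub, Derivation.leibniz, smul_eq_mul,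
    pderiv_pderiv_comm (1 : Fin 3) 0, pderiv_pderiv_comm (2 : Fin 3) 0,
    pderiv_pderiv_comm (2 : Fin 3) 1]
  ring

end MvPolynomial

noncomputable def d4Casimir (ω₁₂ ω₂₃ ω₁₃ : ℂ) : MvPolynomial (Fin 3) ℂ :=
  X 0 * X 1 * X 2 - X 0 ^ 2 - X 1 ^ 2 - X 2 ^ 2 - C ω₁₂ * X 0 - C ω₂₃ * X 1 - C ω₁₃ * X 2

theorem d4Bracket_eq_jacobianBracket (ω₁₂ ω₂₃ ω₁₃ : ℂ) (f g : MvPolynomial (Fin 3) ℂ) :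
    d4Bracket ω₁₂ ω₂₃ ω₁₃ f g = jacobianBracket (d4Casimir ω₁₂ ω₂₃ ω₁₃) f g := by
  simp only [d4Bracket, jacobianBracket, d4Casimir, map_sub, Derivation.leibniz,
    Derivation.leibniz_pow, derivation_C, pderiv_X, Pi.single_apply, Fin.reduceEq, if_true,
    if_false, smul_eq_mul, nsmul_eq_mul]
  ring

/-- For any constants `ω₁₂, ω₂₃, ω₁₃ ∈ ℂ`, the bracket with
`{u,v} = uv − 2w − ω₁₃`, `{v,w} = vw − 2u − ω₁₂`, `{w,u} = wu − 2v − ω₂₃`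
satisfies the Jacobi identity, i.e. it defines a Poisson algebra structure
on `ℂ[u,v,w]` for any choice of the constants. -/
theorem d4Bracket_jacobi (ω₁₂ ω₂₃ ω₁₃ : ℂ) (f g h : MvPolynomial (Fin 3) ℂ) :
    d4Bracket ω₁₂ ω₂₃ ω₁₃ f (d4Bracket ω₁₂ ω₂₃ ω₁₃ g h)
      + d4Bracket ω₁₂ ω₂₃ ω₁₃ g (d4Bracket ω₁₂ ω₂₃ ω₁₃ h f)
      + d4Bracket ω₁₂ ω₂₃ ω₁₃ h (d4Bracket ω₁₂ ω₂₃ ω₁₃ f g) = 0 := by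
  simp only [d4Bracket_eq_jacobianBracket]
  exact jacobianBracket_jacobi _ f g h
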